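/- Under the setup below with zero data F(t) = 0 and G(t) = 0, let U : ℝ → (Fin nV → ℝ) be a differentiable solution of the semi-discrete scheme U_t(t) = M(t)U(t), where M(t) = 𝒟(t) + L(t)ℬ(t), L(t) = diag(𝒫(t))⁻¹ δ(t)ᵀ diag(P), and U_t(t) := U'(t) − D_m(t)U(t) + (1/2) g(t) ⊙ U(t). Assume that for every t the matrix inequality diag(𝒫(t)) M(t) + M(t)ᵀ diag(𝒫(t)) + Eᵀ diag(P) diag(W(t)) E ≤ α diag(𝒫(t)) holds in the quadratic-form sense, i.e. xᵀ( diag(𝒫(t)) M(t) + M(t)ᵀ diag(𝒫(t)) + Eᵀ diag(P) diag(W(t)) E )x ≤ α xᵀ diag(𝒫(t)) x for all x ∈ ℝ^{nV}. Then the discrete energy satisfies d/dt [ U(t)ᵀ diag(𝒫(t)) U(t) ] ≤ α · U(t)ᵀ diag(𝒫(t)) U(t) for all t. -/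

import Mathlib

/-!
Differentiating `Uᵀ diag(𝒫) U` gives `Uᵀ diag(g ⊙ 𝒫) U + 2 Uᵀ diag(𝒫) U'`, and the scheme says
`U' = (M + D_m) U - ½ g ⊙ U`; the `½ g ⊙ U` term exactly absorbs the growth of the weights `𝒫`,
so the rate is the quadratic form of `diag(𝒫)(M + D_m) + (M + D_m)ᵀ diag(𝒫)`. By the SBP property
the `D_m` part is the surface term `Eᵀ diag(P) diag(W) E`, and the matrix condition bounds the rest.
-/

open Matrix

section

variable {n : Type*} [Fintype n]

theorem dotProduct_add_transpose_mulVec_self {R : Type*} [CommRing R]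
    (B : Matrix n n R) (x : n → R) :
    x ⬝ᵥ ((B + Bᵀ) *ᵥ x) = 2 * (x ⬝ᵥ (B *ᵥ x)) := by
  rw [add_mulVec, dotProduct_add, dotProduct_transpose_mulVec, two_mul]

variable [DecidableEq n]

theorem HasDerivAt.dotProduct_diagonal_mulVec_self {p x : ℝ → n → ℝ} {p' x' : n → ℝ} {t : ℝ}
    (hp : HasDerivAt p p' t) (hx : HasDerivAt x x' t) :
    HasDerivAt (fun s => x s ⬝ᵥ (diagonal (p s) *ᵥ x s))
      (x t ⬝ᵥ (diagonal p' *ᵥ x t) + 2 * (x t ⬝ᵥ (diagonal (p t) *ᵥ x'))) t := by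
  simp only [dotProduct, mulVec_diagonal, Finset.mul_sum, ← Finset.sum_add_distrib]
  refine HasDerivAt.fun_sum fun i _ => ?_
  have hxi := hasDerivAt_pi.mp hx i
  exact (hxi.fun_mul ((hasDerivAt_pi.mp hp i).fun_mul hxi)).congr_deriv (by ring)

theorem dotProduct_diagonal_mulVec_growth_correction (p g x : n → ℝ) (A : Matrix n n ℝ) :
    x ⬝ᵥ (diagonal (g * p) *ᵥ x) + 2 * (x ⬝ᵥ (diagonal p *ᵥ (A *ᵥ x - (1 / 2 : ℝ) • (g * x))))
      = x ⬝ᵥ ((diagonal p * A + Aᵀ * diagonal p) *ᵥ x) := by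
  rw [show Aᵀ * diagonal p = (diagonal p * A)ᵀ by rw [transpose_mul, diagonal_transpose],
    dotProduct_add_transpose_mulVec_self, ← mulVec_mulVec]
  simp only [dotProduct, mulVec_diagonal, Pi.sub_apply, Pi.smul_apply, Pi.mul_apply, smul_eq_mul,
    Finset.mul_sum, ← Finset.sum_add_distrib]
  exact Finset.sum_congr rfl fun i _ => by ring

end

theorem stmt6_general (nV nS : ℕ)
    (E : Matrix (Fin nS) (Fin nV) ℝ)
    (Psurf : Fin nS → ℝ)
    (Pref : Fin nV → ℝ)
    (g J : ℝ → Fin nV → ℝ)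
    (hJ : ∀ (t : ℝ) (i : Fin nV), HasDerivAt (fun s => J s i) (g t i * J t i) t)
    (Pvol : ℝ → Fin nV → ℝ) (hPvol : ∀ t : ℝ, Pvol t = J t * Pref)
    (Dm : ℝ → Matrix (Fin nV) (Fin nV) ℝ) (W : ℝ → Fin nS → ℝ)
    (hSBP : ∀ t : ℝ, Matrix.diagonal (Pvol t) * Dm t + (Dm t)ᵀ * Matrix.diagonal (Pvol t)
      = Eᵀ * Matrix.diagonal Psurf * Matrix.diagonal (W t) * E)
    (M : ℝ → Matrix (Fin nV) (Fin nV) ℝ)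
    (α : ℝ)
    (hineq : ∀ (t : ℝ) (x : Fin nV → ℝ),
      x ⬝ᵥ ((Matrix.diagonal (Pvol t) * M t + (M t)ᵀ * Matrix.diagonal (Pvol t)
          + Eᵀ * Matrix.diagonal Psurf * Matrix.diagonal (W t) * E) *ᵥ x)
        ≤ α * (x ⬝ᵥ (Matrix.diagonal (Pvol t) *ᵥ x)))
    (U U' : ℝ → Fin nV → ℝ) (hU : ∀ t : ℝ, HasDerivAt U (U' t) t)
    (Ut : ℝ → Fin nV → ℝ)
    (hUt : ∀ t : ℝ, Ut t = U' t - Dm t *ᵥ U t + (1 / 2 : ℝ) • (g t * U t))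
    (hscheme : ∀ t : ℝ, Ut t = M t *ᵥ U t) :
    ∀ t : ℝ, ∃ d : ℝ,
      HasDerivAt (fun s => U s ⬝ᵥ (Matrix.diagonal (Pvol s) *ᵥ U s)) d t
      ∧ d ≤ α * (U t ⬝ᵥ (Matrix.diagonal (Pvol t) *ᵥ U t)) := by
  intro t
  have hPvol' : HasDerivAt Pvol (g t * Pvol t) t := by
    rw [funext hPvol, hasDerivAt_pi]
    intro i
    simpa [mul_assoc] using (hJ t i).mul_const (Pref i)
  have hU' : U' t = (M t + Dm t) *ᵥ U t - (1 / 2 : ℝ) • (g t * U t) := by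
    rw [add_mulVec, ← hscheme, hUt]
    abel
  refine ⟨_, hPvol'.dotProduct_diagonal_mulVec_self (hU t), ?_⟩
  rw [hU', dotProduct_diagonal_mulVec_growth_correction, mul_add, transpose_add, add_mul,
    add_add_add_comm, hSBP]
  exact hineq t (U t)

/-- The discrete energy estimate following from the energy identity (3.16) together
with the matrix condition (3.19): with zero data, if the system matrix
`M(t) = 𝒟(t) + L(t)ℬ(t)` satisfies the quadratic-form inequality, then the discrete
energy `U(t)ᵀ diag(𝒫(t)) U(t)` is differentiable and its derivative is bounded by
`α` times the energy. -/
theorem stmt6 (nV nS : ℕ) (hnV : 0 < nV) (hnS : 0 < nS)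
    (σ : Fin nS → Fin nV) (hσ : Function.Injective σ)
    (E : Matrix (Fin nS) (Fin nV) ℝ)
    (hE : ∀ (k : Fin nS) (j : Fin nV), E k j = if j = σ k then 1 else 0)
    (Psurf : Fin nS → ℝ) (hPsurf : ∀ k, 0 < Psurf k)
    (Pref : Fin nV → ℝ) (hPref : ∀ i, 0 < Pref i)
    (g J : ℝ → Fin nV → ℝ) (hJpos : ∀ (t : ℝ) (i : Fin nV), 0 < J t i)
    (hJ : ∀ (t : ℝ) (i : Fin nV), HasDerivAt (fun s => J s i) (g t i * J t i) t)
    (Pvol : ℝ → Fin nV → ℝ) (hPvol : ∀ t : ℝ, Pvol t = J t * Pref)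
    (Dm : ℝ → Matrix (Fin nV) (Fin nV) ℝ) (W : ℝ → Fin nS → ℝ)
    (hSBP : ∀ t : ℝ, Matrix.diagonal (Pvol t) * Dm t + (Dm t)ᵀ * Matrix.diagonal (Pvol t)
      = Eᵀ * Matrix.diagonal Psurf * Matrix.diagonal (W t) * E)
    (𝒟 : ℝ → Matrix (Fin nV) (Fin nV) ℝ)
    (ℬ δ : ℝ → Matrix (Fin nS) (Fin nV) ℝ)
    (L : ℝ → Matrix (Fin nV) (Fin nS) ℝ)
    (hL : ∀ t : ℝ, L t = (Matrix.diagonal (Pvol t))⁻¹ * (δ t)ᵀ * Matrix.diagonal Psurf)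
    (M : ℝ → Matrix (Fin nV) (Fin nV) ℝ) (hM : ∀ t : ℝ, M t = 𝒟 t + L t * ℬ t)
    (α : ℝ)
    (hineq : ∀ (t : ℝ) (x : Fin nV → ℝ),
      x ⬝ᵥ ((Matrix.diagonal (Pvol t) * M t + (M t)ᵀ * Matrix.diagonal (Pvol t)
          + Eᵀ * Matrix.diagonal Psurf * Matrix.diagonal (W t) * E) *ᵥ x)
        ≤ α * (x ⬝ᵥ (Matrix.diagonal (Pvol t) *ᵥ x)))
    (U U' : ℝ → Fin nV → ℝ) (hU : ∀ t : ℝ, HasDerivAt U (U' t) t)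
    (Ut : ℝ → Fin nV → ℝ)
    (hUt : ∀ t : ℝ, Ut t = U' t - Dm t *ᵥ U t + (1 / 2 : ℝ) • (g t * U t))
    (hscheme : ∀ t : ℝ, Ut t = M t *ᵥ U t) :
    ∀ t : ℝ, ∃ d : ℝ,
      HasDerivAt (fun s => U s ⬝ᵥ (Matrix.diagonal (Pvol s) *ᵥ U s)) d t
      ∧ d ≤ α * (U t ⬝ᵥ (Matrix.diagonal (Pvol t) *ᵥ U t)) :=
  stmt6_general nV nS E Psurf Pref g J hJ Pvol hPvol Dm W hSBP M α hineq U U' hU Ut hUt hscheme
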